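/- Let G be a finite simple graph, let v be a vertex of G of degree exactly 2 whose two neighbors are non-adjacent (i.e., v does not lie in a triangle), let u be a neighbor of v, and let H = G/uv be the simple graph obtained from G by contracting the edge uv (deleting any resulting loops and parallel edges). Then s(H) = s(G). -/

import Mathlib

/-!
A `K₄`-model of `G/uv` lifts to `G` by adding `v` to the branch set of `u`. Conversely, take a
`K₄`-model of `G`. If `v` lies in a branch set, that set also contains a neighbour `n` of `v`:
otherwise it would be `{v}`, and the three other branch sets would each contain one of the at most
two neighbours of `v`. Identifying `v` with `n` then maps the model onto a `K₄`-model of `G/uv`,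
because an edge `vw` with `w ≠ n` has `{n, w} = {u, x}`, and `G/uv` joins `u` to every neighbour
of `v`. Both constructions respect deleted vertex sets, with `v` traded for `u` when `v` is deleted,
so transversals of `G` and of `G/uv` correspond without increase of size.
-/

open SimpleGraph

/-- `G` has a `K₄` minor (branch-set formulation: four nonempty, pairwise disjoint,
connected branch sets with an edge between every two of them). -/
def HasK4Minor {V : Type*} (G : SimpleGraph V) : Prop :=
  ∃ B : Fin 4 → Set V,
    (∀ i, (B i).Nonempty) ∧
    (∀ i, (G.induce (B i)).Connected) ∧
    (∀ i j, i ≠ j → Disjoint (B i) (B j)) ∧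
    (∀ i j, i ≠ j → ∃ u ∈ B i, ∃ v ∈ B j, G.Adj u v)

/-- `X` is a transversal of `G`: the graph `G − X` has no `K₄` minor. -/
def IsTransversal {V : Type*} (G : SimpleGraph V) (X : Finset V) : Prop :=
  ¬ HasK4Minor (G.induce ((↑X : Set V)ᶜ))

/-- `s(G)`: the minimum size of a transversal of `G`. -/
noncomputable def transNum {V : Type*} (G : SimpleGraph V) : ℕ :=
  sInf {n : ℕ | ∃ X : Finset V, X.card = n ∧ IsTransversal G X}

/-- The simple graph obtained from `G` by contracting the edge `uv`: the vertex `v` is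
deleted and its other neighbors become neighbors of `u` (loops and parallel edges
are discarded). -/
def contractEdge {V : Type*} (G : SimpleGraph V) (u v : V) :
    SimpleGraph {x : V // x ≠ v} where
  Adj a b := (a : V) ≠ (b : V) ∧
    (G.Adj a b ∨ ((a : V) = u ∧ G.Adj v b) ∨ ((b : V) = u ∧ G.Adj v a))
  symm := by
    constructor
    rintro a b ⟨hne, h⟩
    refine ⟨hne.symm, ?_⟩
    rcases h with h | ⟨h1, h2⟩ | ⟨h1, h2⟩
    · exact Or.inl h.symm
    · exact Or.inr (Or.inr ⟨h1, h2⟩)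
    · exact Or.inr (Or.inl ⟨h1, h2⟩)
  loopless := by constructor; rintro a ⟨hne, -⟩; exact hne rfl

open Finset

namespace SimpleGraph

variable {A B : Type*} {K : SimpleGraph A} {L : SimpleGraph B}

theorem Connected.of_forall_adj_reachable (hK : K.Connected) (f : A → B)
    (hf : ∀ a b, K.Adj a b → L.Reachable (f a) (f b)) (hcover : ∀ b, ∃ a, L.Reachable b (f a)) :
    L.Connected := by
  have : Nonempty B := hK.nonempty.map f
  have hmap : ∀ a a', K.Reachable a a' → L.Reachable (f a) (f a') := by
    rintro a a' ⟨p⟩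
    induction p with
    | nil => rfl
    | cons h _ ih => exact (hf _ _ h).trans ih
  refine ⟨fun b b' => ?_⟩
  obtain ⟨a, ha⟩ := hcover b
  obtain ⟨a', ha'⟩ := hcover b'
  exact ha.trans ((hmap a a' (hK a a')).trans ha'.symm)

end SimpleGraph

structure K4Model {V : Type*} (G : SimpleGraph V) where
  branch : Fin 4 → Set V
  nonempty : ∀ i, (branch i).Nonempty
  connected : ∀ i, (G.induce (branch i)).Connected
  disjoint : ∀ i j, i ≠ j → Disjoint (branch i) (branch j)
  exists_adj : ∀ i j, i ≠ j → ∃ a ∈ branch i, ∃ b ∈ branch j, G.Adj a b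

theorem hasK4Minor_iff_nonempty_k4Model {V : Type*} {G : SimpleGraph V} :
    HasK4Minor G ↔ Nonempty (K4Model G) :=
  ⟨fun ⟨B, hne, hconn, hdisj, hadj⟩ => ⟨⟨B, hne, hconn, hdisj, hadj⟩⟩,
    fun ⟨M⟩ => ⟨M.branch, M.nonempty, M.connected, M.disjoint, M.exists_adj⟩⟩

namespace K4Model

variable {A B : Type*} {K : SimpleGraph A} {L : SimpleGraph B}

def map (M : K4Model K) (f : A → B) (hf : ∀ a b, K.Adj a b → f a = f b ∨ L.Adj (f a) (f b))
    (hdisj : ∀ i j, i ≠ j → Disjoint (f '' M.branch i) (f '' M.branch j)) : K4Model L where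
  branch i := f '' M.branch i
  nonempty i := (M.nonempty i).image f
  connected i := by
    refine (M.connected i).of_forall_adj_reachable (fun a => ⟨f a, a, a.2, rfl⟩)
      (fun a b hab => ?_) ?_
    · obtain h | h := hf a b hab
      · simp only [h]
        rfl
      · exact Adj.reachable h
    · rintro ⟨_, a, ha, rfl⟩
      exact ⟨⟨a, ha⟩, Reachable.rfl⟩
  disjoint := hdisj
  exists_adj i j hij := by
    obtain ⟨a, ha, b, hb, hab⟩ := M.exists_adj i j hij
    refine ⟨f a, ⟨a, ha, rfl⟩, f b, ⟨b, hb, rfl⟩, (hf a b hab).resolve_left fun h => ?_⟩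
    exact Set.disjoint_left.1 (hdisj i j hij) ⟨a, ha, rfl⟩ ⟨b, hb, h.symm⟩

def mapHom (M : K4Model K) (φ : K →g L) (hφ : Function.Injective φ) : K4Model L :=
  M.map φ (fun _ _ h => Or.inr (φ.map_adj h))
    fun i j hij => (Set.disjoint_image_iff hφ).2 (M.disjoint i j hij)

end K4Model

theorem hasK4Minor_induce_iff {V : Type*} {G : SimpleGraph V} {S : Set V} :
    HasK4Minor (G.induce S) ↔ ∃ M : K4Model G, ∀ i, M.branch i ⊆ S := by
  rw [hasK4Minor_iff_nonempty_k4Model]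
  constructor
  · rintro ⟨M⟩
    refine ⟨M.mapHom (Embedding.induce S).toHom Subtype.val_injective, fun i => ?_⟩
    rintro _ ⟨a, -, rfl⟩
    exact a.2
  · rintro ⟨M, hMS⟩
    exact ⟨{
      branch i := Subtype.val ⁻¹' M.branch i
      nonempty i := let ⟨a, ha⟩ := M.nonempty i; ⟨⟨a, hMS i ha⟩, ha⟩
      connected i := (M.connected i).of_forall_adj_reachable (fun a => ⟨⟨a, hMS i a.2⟩, a.2⟩)
        (fun _ _ h => Adj.reachable (by exact h)) fun b => ⟨⟨b.1.1, b.2⟩, Reachable.rfl⟩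
      disjoint i j hij := (M.disjoint i j hij).preimage _
      exists_adj i j hij :=
        let ⟨a, ha, b, hb, hab⟩ := M.exists_adj i j hij
        ⟨⟨a, hMS i ha⟩, ha, ⟨b, hMS j hb⟩, hb, hab⟩ }⟩

section Contraction

variable {V : Type*} {G : SimpleGraph V} {u v x n : V}

open Classical in
noncomputable def contractMap (h : n ≠ v) (y : V) : {y : V // y ≠ v} :=
  if hy : y = v then ⟨n, h⟩ else ⟨y, hy⟩

@[simp]
theorem contractMap_self (h : n ≠ v) : contractMap h v = ⟨n, h⟩ := dif_pos rfl

theorem contractMap_of_ne (h : n ≠ v) {y : V} (hy : y ≠ v) : contractMap h y = ⟨y, hy⟩ :=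
  dif_neg hy

@[simp]
theorem contractMap_coe (h : n ≠ v) (a : {y : V // y ≠ v}) : contractMap h a = a :=
  contractMap_of_ne h a.2

theorem connected_induce_preimage_contractMap (hvu : G.Adj v u) {s : Set {y : V // y ≠ v}}
    (hs : ((contractEdge G u v).induce s).Connected) :
    (G.induce (contractMap hvu.ne' ⁻¹' s)).Connected := by
  have hv_mem : ∀ a ∈ s, (a : V) = u → v ∈ contractMap hvu.ne' ⁻¹' s := by
    rintro a ha rfl
    simpa using ha
  have hmem : ∀ a : s, (a : V) ∈ contractMap hvu.ne' ⁻¹' s := fun a => by simp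
  refine hs.of_forall_adj_reachable (fun a => ⟨a.1, hmem a⟩) ?_ ?_
  · rintro a b ⟨-, hab | ⟨hau, hvb⟩ | ⟨hbu, hva⟩⟩
    · exact Adj.reachable (by exact hab)
    · have hav : (G.induce _).Adj ⟨a.1, hmem a⟩ ⟨v, hv_mem _ a.2 hau⟩ := by
        change G.Adj a v
        exact hau ▸ hvu.symm
      exact hav.reachable.trans (Adj.reachable (by exact hvb))
    · have hvb : (G.induce _).Adj ⟨v, hv_mem _ b.2 hbu⟩ ⟨b.1, hmem b⟩ := by
        change G.Adj v b
        exact hbu ▸ hvu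
      exact (Adj.reachable (by exact hva.symm)).trans hvb.reachable
  · rintro ⟨y, hy⟩
    by_cases hyv : y = v
    · subst hyv
      exact ⟨⟨⟨u, hvu.ne'⟩, by simpa using hy⟩, Adj.reachable hvu⟩
    · exact ⟨⟨⟨y, hyv⟩, by simpa [contractMap_of_ne _ hyv] using hy⟩, Reachable.rfl⟩

def K4Model.ofContractEdge (hvu : G.Adj v u) (M : K4Model (contractEdge G u v)) :
    K4Model G where
  branch i := contractMap hvu.ne' ⁻¹' M.branch i
  nonempty i := let ⟨a, ha⟩ := M.nonempty i; ⟨a, by simpa using ha⟩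
  connected i := connected_induce_preimage_contractMap hvu (M.connected i)
  disjoint i j hij := (M.disjoint i j hij).preimage _
  exists_adj i j hij := by
    obtain ⟨a, ha, b, hb, -, hab | ⟨rfl, hvb⟩ | ⟨rfl, hva⟩⟩ := M.exists_adj i j hij
    · exact ⟨a, by simpa using ha, b, by simpa using hb, hab⟩
    · exact ⟨v, by simpa using ha, b, by simpa using hb, hvb⟩
    · exact ⟨a, by simpa using ha, v, by simpa using hb, hva.symm⟩

theorem hasK4Minor_induce_of_contractEdge (hvu : G.Adj v u) {S : Set V} (hvS : v ∈ S)
    (h : HasK4Minor ((contractEdge G u v).induce (Subtype.val ⁻¹' S))) :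
    HasK4Minor (G.induce S) := by
  rw [hasK4Minor_induce_iff] at h ⊢
  obtain ⟨M, hM⟩ := h
  refine ⟨M.ofContractEdge hvu, fun i y hy => ?_⟩
  by_cases hyv : y = v
  · exact hyv ▸ hvS
  · simpa [contractMap_of_ne _ hyv] using hM i hy

theorem contractMap_adj_or_eq (hvn : G.Adj v n) (hN : G.neighborSet v ⊆ {u, x}) {a b : V}
    (hab : G.Adj a b) :
    contractMap hvn.ne' a = contractMap hvn.ne' b ∨
      (contractEdge G u v).Adj (contractMap hvn.ne' a) (contractMap hvn.ne' b) := by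
  have hv : ∀ w (hvw : G.Adj v w), (⟨n, hvn.ne'⟩ : {y // y ≠ v}) = ⟨w, hvw.ne'⟩ ∨
      (contractEdge G u v).Adj ⟨n, hvn.ne'⟩ ⟨w, hvw.ne'⟩ := by
    intro w hvw
    by_cases hnw : n = w
    · exact Or.inl (Subtype.ext hnw)
    · refine Or.inr ⟨hnw, ?_⟩
      have hn : n = u ∨ n = x := hN hvn
      have hw : w = u ∨ w = x := hN hvw
      rcases hn with rfl | rfl
      · exact Or.inr (Or.inl ⟨rfl, hvw⟩)
      · obtain rfl : w = u := hw.resolve_right (Ne.symm hnw)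
        exact Or.inr (Or.inr ⟨rfl, hvn⟩)
  by_cases hav : a = v
  · subst hav
    rw [contractMap_self, contractMap_of_ne _ hab.ne']
    exact hv b hab
  by_cases hbv : b = v
  · subst hbv
    rw [contractMap_self, contractMap_of_ne _ hav]
    exact (hv a hab.symm).imp Eq.symm Adj.symm
  · rw [contractMap_of_ne _ hav, contractMap_of_ne _ hbv]
    exact Or.inr ⟨hab.ne, Or.inl hab⟩

theorem image_contractMap_subset (h : n ≠ v) {s : Set V} (hs : v ∈ s → n ∈ s) :
    contractMap h '' s ⊆ Subtype.val ⁻¹' s := by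
  rintro _ ⟨y, hy, rfl⟩
  by_cases hyv : y = v
  · subst hyv
    simpa using hs hy
  · simpa [contractMap_of_ne h hyv] using hy

theorem K4Model.exists_adj_mem_branch (M : K4Model G) (hN : G.neighborSet v ⊆ {u, x})
    {i : Fin 4} (hv : v ∈ M.branch i) : ∃ n ∈ M.branch i, G.Adj v n := by
  classical
  rcases subsingleton_or_nontrivial (M.branch i) with hsub | hnt
  · exfalso
    -- `M.branch i = {v}`, so each other branch set contains a neighbour of `v`
    have hnbr : ∀ j, ∃ n, j ≠ i → n ∈ M.branch j ∧ G.Adj v n := by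
      intro j
      by_cases hji : j = i
      · exact ⟨v, fun h => (h hji).elim⟩
      obtain ⟨a, ha, b, hb, hab⟩ := M.exists_adj i j (Ne.symm hji)
      obtain rfl : a = v := congrArg Subtype.val (Subsingleton.elim ⟨a, ha⟩ ⟨v, hv⟩)
      exact ⟨b, fun _ => ⟨hb, hab⟩⟩
    choose f hf using hnbr
    obtain ⟨j, hj, k, hk, hjk, hfjk⟩ :=
      exists_ne_map_eq_of_card_lt_of_maps_to (s := univ.erase i) (t := {u, x}) (f := f)
        (card_le_two.trans_lt (by simp)) fun j hj => by
          simpa using hN (hf j (ne_of_mem_erase hj)).2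
    exact Set.disjoint_left.1 (M.disjoint j k hjk) (hf j (ne_of_mem_erase hj)).1
      (hfjk ▸ (hf k (ne_of_mem_erase hk)).1)
  · obtain ⟨n, hn⟩ := (M.connected i).preconnected.exists_adj_of_nontrivial ⟨v, hv⟩
    exact ⟨n, n.2, hn⟩

theorem K4Model.exists_adj_forall_mem (M : K4Model G) (hvu : G.Adj v u)
    (hN : G.neighborSet v ⊆ {u, x}) :
    ∃ n, G.Adj v n ∧ ∀ i, v ∈ M.branch i → n ∈ M.branch i := by
  by_cases hv : ∃ i, v ∈ M.branch i
  · obtain ⟨i, hi⟩ := hv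
    obtain ⟨n, hn, hvn⟩ := M.exists_adj_mem_branch hN hi
    refine ⟨n, hvn, fun j hj => ?_⟩
    obtain rfl : j = i := by_contra fun h => Set.disjoint_left.1 (M.disjoint j i h) hj hi
    exact hn
  · simp only [not_exists] at hv
    exact ⟨u, hvu, fun i hi => (hv i hi).elim⟩

theorem K4Model.exists_contractEdge (M : K4Model G) (hvu : G.Adj v u)
    (hN : G.neighborSet v ⊆ {u, x}) :
    ∃ M' : K4Model (contractEdge G u v), ∀ i, M'.branch i ⊆ Subtype.val ⁻¹' M.branch i := by
  obtain ⟨n, hvn, hn⟩ := M.exists_adj_forall_mem hvu hN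
  refine ⟨M.map (contractMap hvn.ne') (fun _ _ => contractMap_adj_or_eq hvn hN) fun i j hij => ?_,
    fun i => image_contractMap_subset _ (hn i)⟩
  exact ((M.disjoint i j hij).preimage Subtype.val).mono
    (image_contractMap_subset _ (hn i)) (image_contractMap_subset _ (hn j))

theorem hasK4Minor_contractEdge_induce (hvu : G.Adj v u) (hN : G.neighborSet v ⊆ {u, x})
    {S : Set V} (h : HasK4Minor (G.induce S)) :
    HasK4Minor ((contractEdge G u v).induce (Subtype.val ⁻¹' S)) := by
  rw [hasK4Minor_induce_iff] at h ⊢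
  obtain ⟨M, hM⟩ := h
  obtain ⟨M', hM'⟩ := M.exists_contractEdge hvu hN
  exact ⟨M', fun i => (hM' i).trans (Set.preimage_mono (hM i))⟩

end Contraction

section Transversal

variable {V : Type*} {G : SimpleGraph V} {u v x : V}

theorem Nat.sInf_eq_of_forall_exists_le {s t : Set ℕ} (hst : ∀ a ∈ s, ∃ b ∈ t, b ≤ a)
    (hts : ∀ b ∈ t, ∃ a ∈ s, a ≤ b) : sInf s = sInf t := by
  have key : ∀ {s t : Set ℕ}, (∀ a ∈ s, ∃ b ∈ t, b ≤ a) → (∀ b ∈ t, ∃ a ∈ s, a ≤ b) →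
      sInf t ≤ sInf s := by
    intro s t hst hts
    rcases s.eq_empty_or_nonempty with rfl | hs
    · rcases t.eq_empty_or_nonempty with rfl | ⟨b, hb⟩
      · rfl
      · obtain ⟨a, ha, -⟩ := hts b hb
        exact ha.elim
    · obtain ⟨b, hb, hba⟩ := hst _ (Nat.sInf_mem hs)
      exact (Nat.sInf_le hb).trans hba
  exact le_antisymm (key hts hst) (key hst hts)

theorem transNum_eq_of_forall_exists {W : Type*} {H : SimpleGraph W}
    (hGH : ∀ X, IsTransversal G X → ∃ Y, IsTransversal H Y ∧ #Y ≤ #X)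
    (hHG : ∀ Y, IsTransversal H Y → ∃ X, IsTransversal G X ∧ #X ≤ #Y) :
    transNum G = transNum H := by
  refine Nat.sInf_eq_of_forall_exists_le ?_ ?_
  · rintro _ ⟨X, rfl, hX⟩
    obtain ⟨Y, hY, hYX⟩ := hGH X hX
    exact ⟨_, ⟨Y, rfl, hY⟩, hYX⟩
  · rintro _ ⟨Y, rfl, hY⟩
    obtain ⟨X, hX, hXY⟩ := hHG Y hY
    exact ⟨_, ⟨X, rfl, hX⟩, hXY⟩

theorem IsTransversal.of_contractEdge {Y : Finset {y : V // y ≠ v}}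
    (hY : IsTransversal (contractEdge G u v) Y) (hvu : G.Adj v u)
    (hN : G.neighborSet v ⊆ {u, x}) : IsTransversal G (Y.map (Function.Embedding.subtype _)) := by
  have hcompl : Subtype.val ⁻¹' (↑(Y.map (Function.Embedding.subtype _)) : Set V)ᶜ =
      (↑Y : Set {y : V // y ≠ v})ᶜ := by
    ext
    simp
  intro h
  exact hY (hcompl ▸ hasK4Minor_contractEdge_induce hvu hN h)

variable [DecidableEq V] {X : Finset V}

theorem card_insert_subtype_ne_le (hvX : v ∈ X) (w : {y : V // y ≠ v}) :
    #(insert w (X.subtype (· ≠ v))) ≤ #X := by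
  have hcard : #(X.subtype (· ≠ v)) + 1 = #X := by
    rw [card_subtype, filter_ne', card_erase_add_one hvX]
  exact (card_insert_le _ _).trans hcard.le

theorem IsTransversal.contractEdge_insert (hX : IsTransversal G X) (hvu : G.Adj v u) :
    IsTransversal (contractEdge G u v) (insert ⟨u, hvu.ne'⟩ (X.subtype (· ≠ v))) := by
  set X' := insert ⟨u, hvu.ne'⟩ (X.subtype (· ≠ v))
  have hmem : ∀ a : ↥((↑X' : Set {y : V // y ≠ v})ᶜ), (a : V) ∉ X := fun a h =>
    a.2 (mem_insert_of_mem (mem_subtype.2 h))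
  have hne_u : ∀ a : ↥((↑X' : Set {y : V // y ≠ v})ᶜ), (a : V) ≠ u := fun a h =>
    a.2 (mem_insert.2 (Or.inl (Subtype.ext h)))
  -- `u ∈ X'`, so off `X'` the contraction adds no edge to `G - X`
  let φ : (contractEdge G u v).induce (↑X')ᶜ →g G.induce (↑X)ᶜ :=
    { toFun a := ⟨a, hmem a⟩
      map_rel' := by
        rintro a b ⟨-, hab | ⟨hau, -⟩ | ⟨hbu, -⟩⟩
        · exact hab
        · exact (hne_u a hau).elim
        · exact (hne_u b hbu).elim }
  have hφ : Function.Injective φ := fun a b h => by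
    ext
    simpa [φ] using congrArg Subtype.val h
  rintro h
  obtain ⟨M⟩ := hasK4Minor_iff_nonempty_k4Model.1 h
  exact hX (hasK4Minor_iff_nonempty_k4Model.2 ⟨M.mapHom φ hφ⟩)

theorem IsTransversal.contractEdge_of_notMem (hX : IsTransversal G X) (hvu : G.Adj v u)
    (hvX : v ∉ X) : IsTransversal (contractEdge G u v) (X.subtype (· ≠ v)) := by
  have hcompl : ((↑(X.subtype (· ≠ v)) : Set {y : V // y ≠ v}))ᶜ =
      Subtype.val ⁻¹' (↑X : Set V)ᶜ := by
    ext
    simp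
  rw [IsTransversal, hcompl]
  exact fun h => hX (hasK4Minor_induce_of_contractEdge hvu hvX h)

end Transversal

theorem statement7_general {V : Type*} (G : SimpleGraph V) (u v x : V)
    (huv : G.Adj v u) (hN : G.neighborSet v = {u, x}) :
    transNum (contractEdge G u v) = transNum G := by
  classical
  refine (transNum_eq_of_forall_exists (fun X hX => ?_) fun Y hY => ?_).symm
  · by_cases hvX : v ∈ X
    · exact ⟨_, hX.contractEdge_insert huv, card_insert_subtype_ne_le hvX _⟩
    · exact ⟨_, hX.contractEdge_of_notMem huv hvX,
        (card_subtype _ _).trans_le (card_filter_le _ _)⟩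
  · exact ⟨_, hY.of_contractEdge huv hN.subset, (card_map _).le⟩

/-- Contracting an edge `uv` incident to a degree-2 vertex `v` whose two neighbors are
non-adjacent does not change `s(G)`. -/
theorem statement7 {V : Type*} [Fintype V] (G : SimpleGraph V) (u v x : V)
    (huv : G.Adj v u) (hux : u ≠ x) (hN : G.neighborSet v = {u, x})
    (hnadj : ¬ G.Adj u x) :
    transNum (contractEdge G u v) = transNum G :=
  statement7_general G u v x huv hN
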